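/- arXiv:1702.01321 — 7 statements merged into one kernel-verified Lean document; each statement's English description precedes it below -/
import Mathlib

section
/- Let F be a field, let n ≥ 1, let x ∈ F with x ≠ 1 and x ≠ -1, let y ∈ F, and set z = y·x/(x² - 1). Then the n×n Zhang–Liu matrix satisfies the factorization Q(y,x) = P₁(z) · D(x²) · P₁(-z). -/
open Matrix Finset

/-- Generalized Pascal matrix of the first kind: with 1-based indexing the (i,j) entry is
`y^(j-i) * binom(j-1, i-1)` for `j ≥ i` and `0` otherwise. Here indices are 0-based. -/
def pascal1 {R : Type*} [CommRing R] (n : ℕ) (y : R) : Matrix (Fin n) (Fin n) R :=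
  Matrix.of fun i j => if i ≤ j then y ^ (j.val - i.val) * (Nat.choose j.val i.val : R) else 0

/-- Zhang–Liu matrix: with 1-based indexing the (i,j) entry is
`y^(j-i) * x^(i+j-2) * binom(j-1, i-1)` for `j ≥ i` and `0` otherwise. Indices 0-based here. -/
def zhangLiu {R : Type*} [CommRing R] (n : ℕ) (y x : R) : Matrix (Fin n) (Fin n) R :=
  Matrix.of fun i j =>
    if i ≤ j then y ^ (j.val - i.val) * x ^ (i.val + j.val) * (Nat.choose j.val i.val : R) else 0

/-- `D(α)` : the diagonal matrix with (i,i) entry `α^(i-1)` (1-based), i.e. `α^i` 0-based. -/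
def diagD {R : Type*} [CommRing R] (n : ℕ) (α : R) : Matrix (Fin n) (Fin n) R :=
  Matrix.diagonal fun i : Fin n => α ^ i.val

/-! Entrywise, `Q(y, x) = D(x²) P₁(xy)`. The Pascal matrices form a one-parameter group,
`P₁(a) P₁(b) = P₁(a + b)` (a binomial identity after `C(j,k) C(k,i) = C(j,i) C(j-i,k-i)`), and
`D(c)` rescales the parameter: `D(c) P₁(cu) = P₁(u) D(c)`. Hence
`P₁(z) D(x²) P₁(-z) = D(x²) P₁((x² - 1) z) = D(x²) P₁(xy)`. -/

theorem Fin.sum_Icc_eq_sum_range {M : Type*} [AddCommMonoid M] {n : ℕ} (f : ℕ → M) (i j : Fin n) :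
    ∑ k ∈ Icc i j, f k = ∑ m ∈ range (j + 1 - i), f (i + m) := by
  rw [← sum_Ico_eq_sum_range, Ico_add_one_right_eq_Icc, ← Fin.map_valEmbedding_Icc, sum_map]
  rfl

theorem sum_pow_mul_choose_mul_pow_mul_choose {R : Type*} [CommRing R] (a b : R) (i d : ℕ) :
    ∑ m ∈ range (d + 1),
        a ^ m * ((i + m).choose i : R) * (b ^ (d - m) * ((i + d).choose (i + m) : R)) =
      (a + b) ^ d * ((i + d).choose i : R) := by
  rw [add_pow, sum_mul]
  refine sum_congr rfl fun m _ => ?_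
  have hchoose : (i + d).choose (i + m) * (i + m).choose i = (i + d).choose i * d.choose m := by
    rw [Nat.choose_mul (Nat.le_add_right i m), Nat.add_sub_cancel_left, Nat.add_sub_cancel_left]
  have hchooseR := congrArg (Nat.cast : ℕ → R) hchoose
  push_cast at hchooseR
  linear_combination a ^ m * b ^ (d - m) * hchooseR

section

variable {R : Type*} [CommRing R] {n : ℕ}

theorem pascal1_mul_pascal1 (a b : R) : pascal1 n a * pascal1 n b = pascal1 n (a + b) := by
  ext i j
  have hsupport : ∀ k ∉ Icc i j, pascal1 n a i k * pascal1 n b k j = 0 := by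
    intro k hk
    simp only [mem_Icc, not_and_or, not_le] at hk
    rcases hk with hk | hk <;> simp [pascal1, hk.not_ge]
  rw [mul_apply, ← sum_subset (subset_univ _) fun k _ hk => hsupport k hk]
  simp only [pascal1, of_apply]
  by_cases hij : i ≤ j
  · obtain ⟨d, hd⟩ : ∃ d, (j : ℕ) = i + d := ⟨_, (Nat.add_sub_cancel' hij).symm⟩
    rw [sum_congr rfl fun k hk => by rw [if_pos (mem_Icc.1 hk).1, if_pos (mem_Icc.1 hk).2],
      Fin.sum_Icc_eq_sum_range
        (fun k => a ^ (k - i) * (k.choose i : R) * (b ^ (j - k) * ((j : ℕ).choose k : R))),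
      if_pos hij, hd, show i + d + 1 - i = d + 1 by omega]
    simp only [Nat.add_sub_cancel_left, Nat.add_sub_add_left]
    exact sum_pow_mul_choose_mul_pow_mul_choose a b i d
  · rw [Icc_eq_empty hij, sum_empty, if_neg hij]

theorem diagD_mul_pascal1 (c u : R) : diagD n c * pascal1 n (c * u) = pascal1 n u * diagD n c := by
  ext i j
  simp only [diagD, pascal1, diagonal_mul, mul_diagonal, of_apply]
  split_ifs with hij
  · obtain ⟨d, hd⟩ : ∃ d, (j : ℕ) = i + d := ⟨_, (Nat.add_sub_cancel' hij).symm⟩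
    rw [hd, Nat.add_sub_cancel_left]
    ring
  · simp

theorem zhangLiu_eq_diagD_mul_pascal1 (y x : R) :
    zhangLiu n y x = diagD n (x ^ 2) * pascal1 n (x * y) := by
  ext i j
  simp only [zhangLiu, diagD, pascal1, diagonal_mul, of_apply]
  split_ifs with hij
  · obtain ⟨d, hd⟩ : ∃ d, (j : ℕ) = i + d := ⟨_, (Nat.add_sub_cancel' hij).symm⟩
    rw [hd, Nat.add_sub_cancel_left]
    ring
  · simp

end

theorem zhangLiu_factorization_general {F : Type*} [Field F] (n : ℕ)
    (x y : F) (hx1 : x ≠ 1) (hx2 : x ≠ -1) (z : F) (hz : z = y * x / (x ^ 2 - 1)) :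
    zhangLiu n y x = pascal1 n z * diagD n (x ^ 2) * pascal1 n (-z) := by
  have hx : x ^ 2 - 1 ≠ 0 := sub_ne_zero.2 (sq_ne_one_iff.2 ⟨hx1, hx2⟩)
  have hxy : x * y = x ^ 2 * z + -z := by
    rw [hz]
    field_simp
    ring
  rw [← diagD_mul_pascal1, Matrix.mul_assoc, pascal1_mul_pascal1, ← hxy,
    zhangLiu_eq_diagD_mul_pascal1]

theorem zhangLiu_factorization {F : Type*} [Field F] (n : ℕ) (hn : 1 ≤ n)
    (x y : F) (hx1 : x ≠ 1) (hx2 : x ≠ -1) (z : F) (hz : z = y * x / (x ^ 2 - 1)) :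
    zhangLiu n y x = pascal1 n z * diagD n (x ^ 2) * pascal1 n (-z) :=
  zhangLiu_factorization_general n x y hx1 hx2 z hz
end

section
/- Let F be a field, let n ≥ 1, let x ∈ F with x ≠ 1 and x ≠ -1, let y ∈ F, and set z = y·x/(x² - 1). Then for every j with 1 ≤ j ≤ n, the j-th column of P₁(z) is an eigenvector of Q(y,x) with eigenvalue (x²)^{j-1}; that is, Q(y,x) applied to the j-th column of P₁(z) equals (x²)^{j-1} times that column. -/
open Matrix Finset

/-!
The columns of `P₁(z)` are eigenvectors of `Q(y,x)` because `Q(y,x) P₁(z) = P₁(z) D(x²)`.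
Entrywise, after `binom(j,k) binom(k,i) = binom(j,i) binom(j-i,k-i)`, the `(i,j)` entry of the
left side is `x^(2i) binom(j,i) (yx + z)^(j-i)` by the binomial theorem, and the choice of `z`
is exactly the relation `yx + z = z x²` that turns this into `z^(j-i) binom(j,i) x^(2j)`.
-/

section

variable {R : Type*} [CommRing R]

theorem pascal1_apply (n : ℕ) (y : R) (i j : Fin n) :
    pascal1 n y i j = y ^ (j.val - i.val) * (j.val.choose i.val : R) := by
  rw [pascal1, of_apply]
  split_ifs with h
  · rfl
  · rw [Nat.choose_eq_zero_of_lt (not_le.mp h), Nat.cast_zero, mul_zero]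

theorem zhangLiu_apply (n : ℕ) (y x : R) (i j : Fin n) :
    zhangLiu n y x i j = y ^ (j.val - i.val) * x ^ (i.val + j.val) * (j.val.choose i.val : R) := by
  rw [zhangLiu, of_apply]
  split_ifs with h
  · rfl
  · rw [Nat.choose_eq_zero_of_lt (not_le.mp h), Nat.cast_zero, mul_zero]

theorem sum_range_choose_mul_choose_mul_pow (a b : R) (i j : ℕ) :
    ∑ k ∈ range (j + 1), (j.choose k * k.choose i : R) * (a ^ (k - i) * b ^ (j - k)) =
      j.choose i * (a + b) ^ (j - i) := by
  rcases le_or_gt i j with hij | hji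
  · have hlow : ∑ k ∈ range i, (j.choose k * k.choose i : R) * (a ^ (k - i) * b ^ (j - k)) = 0 :=
      sum_eq_zero fun k hk => by
        rw [Nat.choose_eq_zero_of_lt (mem_range.mp hk), Nat.cast_zero, mul_zero, zero_mul]
    rw [← sum_range_add_sum_Ico _ (Nat.le_succ_of_le hij), hlow, zero_add, sum_Ico_eq_sum_range,
      add_pow, mul_sum, Nat.succ_sub hij]
    refine sum_congr rfl fun m _ => ?_
    have hchoose : (j.choose (i + m) * (i + m).choose i : R) = j.choose i * (j - i).choose m := by
      rw [← Nat.cast_mul, Nat.choose_mul (Nat.le_add_right i m), Nat.add_sub_cancel_left,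
        Nat.cast_mul]
    rw [hchoose, Nat.add_sub_cancel_left, ← Nat.sub_sub]
    ring
  · refine (sum_eq_zero fun k hk => ?_).trans (by rw [Nat.choose_eq_zero_of_lt hji]; simp)
    have hki : k < i := (Nat.lt_succ_iff.mp (mem_range.mp hk)).trans_lt hji
    rw [Nat.choose_eq_zero_of_lt hki, Nat.cast_zero, mul_zero, zero_mul]

theorem zhangLiu_mul_pascal1 (n : ℕ) {x y z : R} (h : y * x + z = z * x ^ 2) :
    zhangLiu n y x * pascal1 n z = pascal1 n z * diagD n (x ^ 2) := by
  ext i j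
  rw [diagD, mul_diagonal, mul_apply]
  simp only [zhangLiu_apply, pascal1_apply]
  set f : ℕ → R := fun k =>
    y ^ (k - i.val) * x ^ (i.val + k) * (k.choose i.val : R) * (z ^ (j.val - k) * j.val.choose k)
  have hterm (k : ℕ) : f k = x ^ (2 * i.val) *
      ((j.val.choose k * k.choose i.val : R) * ((y * x) ^ (k - i.val) * z ^ (j.val - k))) := by
    dsimp only [f]
    rcases le_or_gt i.val k with hik | hki
    · rw [show i.val + k = 2 * i.val + (k - i.val) by omega, pow_add, mul_pow]
      ring
    · simp [Nat.choose_eq_zero_of_lt hki]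
  calc ∑ k : Fin n, f k
      = ∑ k ∈ range n, f k := Fin.sum_univ_eq_sum_range f n
    _ = ∑ k ∈ range (j.val + 1), f k := by
        refine (sum_subset (range_subset_range.mpr j.isLt) fun k _ hk => ?_).symm
        simp [f, Nat.choose_eq_zero_of_lt (not_lt.mp (mt mem_range.mpr hk))]
    _ = x ^ (2 * i.val) * (j.val.choose i.val * (y * x + z) ^ (j.val - i.val)) := by
        simp_rw [hterm]
        rw [← mul_sum, sum_range_choose_mul_choose_mul_pow]
    _ = z ^ (j.val - i.val) * j.val.choose i.val * (x ^ 2) ^ j.val := by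
        rcases le_or_gt i.val j.val with hij | hji
        · rw [h, show j.val = i.val + (j.val - i.val) from (Nat.add_sub_cancel' hij).symm,
            Nat.add_sub_cancel_left, pow_mul, pow_add, mul_pow]
          ring
        · simp [Nat.choose_eq_zero_of_lt hji]

end

theorem zhangLiu_eigenvectors_general {F : Type*} [Field F] (n : ℕ)
    (x y : F) (hx1 : x ≠ 1) (hx2 : x ≠ -1) (z : F) (hz : z = y * x / (x ^ 2 - 1))
    (j : Fin n) :
    (zhangLiu n y x).mulVec (fun i => pascal1 n z i j) =
      (x ^ 2) ^ j.val • fun i => pascal1 n z i j := by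
  have hx : x ^ 2 - 1 ≠ 0 := sub_ne_zero.mpr (sq_ne_one_iff.mpr ⟨hx1, hx2⟩)
  have hrel : y * x + z = z * x ^ 2 := by
    rw [hz]
    field_simp
    ring
  funext i
  change (zhangLiu n y x * pascal1 n z) i j = _
  rw [zhangLiu_mul_pascal1 n hrel, diagD, mul_diagonal, Pi.smul_apply, smul_eq_mul, mul_comm]

theorem zhangLiu_eigenvectors {F : Type*} [Field F] (n : ℕ) (hn : 1 ≤ n)
    (x y : F) (hx1 : x ≠ 1) (hx2 : x ≠ -1) (z : F) (hz : z = y * x / (x ^ 2 - 1))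
    (j : Fin n) :
    (zhangLiu n y x).mulVec (fun i => pascal1 n z i j) =
      (x ^ 2) ^ j.val • fun i => pascal1 n z i j :=
  zhangLiu_eigenvectors_general n x y hx1 hx2 z hz j
end

section
/- Let R be a commutative ring with identity, let n ≥ 1, and let y ∈ R. Then P₁(y) is invertible with P₁(y)⁻¹ = P₁(-y); equivalently, P₁(y) · P₁(-y) = I and P₁(-y) · P₁(y) = I, where I is the n×n identity matrix. -/
/-!
Column `j` of `pascal1 n y` holds the coefficients of `(X + y) ^ j`, so the matrix represents the
Taylor shift `p(X) ↦ p(X + y)` on polynomials of degree `< n`. Shifts compose additively, hence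
`y ↦ pascal1 n y` turns addition into matrix multiplication; entrywise this is the binomial
theorem combined with `C(j,k) C(k,i) = C(j,i) C(j-i,k-i)`.
-/

open Matrix Finset

section

variable {R : Type*} [CommRing R]

theorem sum_Icc_pow_mul_choose_mul_pow_mul_choose (x y : R) {i j : ℕ} (hij : i ≤ j) :
    ∑ k ∈ Icc i j, x ^ (k - i) * (k.choose i : R) * (y ^ (j - k) * (j.choose k : R)) =
      (x + y) ^ (j - i) * (j.choose i : R) := by
  have hterm (m : ℕ) :
      x ^ (i + m - i) * ((i + m).choose i : R) * (y ^ (j - (i + m)) * (j.choose (i + m) : R)) =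
        x ^ m * y ^ (j - i - m) * ((j - i).choose m : R) * (j.choose i : R) := by
    have hchoose : j.choose (i + m) * (i + m).choose i = j.choose i * (j - i).choose m := by
      simpa using Nat.choose_mul (n := j) (Nat.le_add_right i m)
    rw [Nat.add_sub_cancel_left, Nat.sub_sub]
    have hcast := congrArg (Nat.cast : ℕ → R) hchoose
    push_cast at hcast
    linear_combination x ^ m * y ^ (j - (i + m)) * hcast
  rw [← Ico_add_one_right_eq_Icc, sum_Ico_eq_sum_range, Nat.sub_add_comm hij, add_pow, sum_mul]
  exact sum_congr rfl fun m _ => hterm m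

theorem pascal1_mul (n : ℕ) (x y : R) : pascal1 n x * pascal1 n y = pascal1 n (x + y) := by
  ext i j
  simp only [mul_apply, pascal1, of_apply, ite_zero_mul_ite_zero]
  have hIcc : ∀ k, i ≤ k ∧ k ≤ j ↔ k ∈ Icc i j := fun k => mem_Icc.symm
  simp only [hIcc, sum_ite_mem, univ_inter]
  refine (sum_map (Icc i j) Fin.valEmbedding
    fun k => x ^ (k - i) * (k.choose i : R) * (y ^ (j.val - k) * (j.val.choose k : R))).symm.trans ?_
  rw [Fin.map_valEmbedding_Icc]
  split_ifs with hij
  · exact sum_Icc_pow_mul_choose_mul_pow_mul_choose x y hij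
  · rw [Icc_eq_empty (by simpa using hij), sum_empty]

theorem pascal1_zero (n : ℕ) : pascal1 n (0 : R) = 1 := by
  ext i j
  rcases lt_trichotomy i j with hlt | rfl | hgt
  · simp [pascal1, hlt.le, hlt.ne, zero_pow (Nat.sub_ne_zero_of_lt hlt)]
  · simp [pascal1]
  · simp [pascal1, hgt.not_ge, hgt.ne']

end

theorem pascal1_inv_general {R : Type*} [CommRing R] (n : ℕ) (y : R) :
    pascal1 n y * pascal1 n (-y) = 1 ∧ pascal1 n (-y) * pascal1 n y = 1 ∧
      IsUnit (pascal1 n y) ∧ (pascal1 n y)⁻¹ = pascal1 n (-y) := by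
  have hright : pascal1 n y * pascal1 n (-y) = 1 := by
    rw [pascal1_mul, add_neg_cancel, pascal1_zero]
  have hleft : pascal1 n (-y) * pascal1 n y = 1 := by
    rw [pascal1_mul, neg_add_cancel, pascal1_zero]
  exact ⟨hright, hleft, ⟨⟨_, _, hright, hleft⟩, rfl⟩, inv_eq_right_inv hright⟩

theorem pascal1_inv {R : Type*} [CommRing R] (n : ℕ) (hn : 1 ≤ n) (y : R) :
    pascal1 n y * pascal1 n (-y) = 1 ∧ pascal1 n (-y) * pascal1 n y = 1 ∧
      IsUnit (pascal1 n y) ∧ (pascal1 n y)⁻¹ = pascal1 n (-y) :=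
  pascal1_inv_general n y
end

section
/- Let F be a field, let n ≥ 2, let x ∈ F with x ≠ 0, and let y ∈ F. Then the n×n Zhang–Liu matrix Q(y,x) is diagonalizable over F (i.e., there exists an invertible n×n matrix S over F such that S⁻¹ · Q(y,x) · S is a diagonal matrix) if and only if x ∉ {1, -1} or y = 0. -/
/-!
In the monomial basis of the polynomials of degree `< n`, `Q(y,x)` is the matrix of the
substitution `p(t) ↦ p(x² t + x y)`, and such affine substitution matrices multiply like the
affine maps they come from. If `c (x² - 1) = x y`, which is solvable when `x² ≠ 1` or `y = 0`,
conjugating by the translation `p(t) ↦ p(t + c)` turns `Q` into the diagonal substitution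
`p(t) ↦ p(x² t)`. If `x² = 1`, then `Q` is unipotent upper triangular; a diagonalizable unipotent
matrix is the identity, but the `(1,2)` entry of `Q` is `x y ≠ 0`.
-/

open Matrix Finset

namespace Matrix

variable {ι R : Type*} [Fintype ι] [CommRing R]

theorem isNilpotent_of_isUpperTriangular [LinearOrder ι] {M : Matrix ι ι R}
    (hM : M.IsUpperTriangular) (hdiag : ∀ i, M i i = 0) : IsNilpotent M := by
  refine ⟨Fintype.card ι, ?_⟩
  simpa [charpoly_of_isUpperTriangular M hM, hdiag] using aeval_self_charpoly M

theorem IsDiag.eq_zero_of_isNilpotent [DecidableEq ι] [IsReduced R] {D : Matrix ι ι R}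
    (hD : D.IsDiag) (hnil : IsNilpotent D) : D = 0 := by
  obtain ⟨k, hk⟩ := hnil
  rw [← hD.diagonal_diag, diagonal_pow, diagonal_eq_zero] at hk
  rw [← hD.diagonal_diag, (IsNilpotent.eq_zero ⟨k, hk⟩ : D.diag = 0)]
  exact diagonal_zero

theorem isNilpotent_inv_mul_mul [DecidableEq ι] {N S : Matrix ι ι R} (hN : IsNilpotent N)
    (hS : IsUnit S) : IsNilpotent (S⁻¹ * N * S) := by
  obtain ⟨u, rfl⟩ := hS
  obtain ⟨k, hk⟩ := hN
  exact ⟨k, by rw [← coe_units_inv, Units.conj_pow', hk, mul_zero, zero_mul]⟩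

theorem IsUpperTriangular.eq_one_of_isDiag_inv_mul_mul [LinearOrder ι] [IsReduced R]
    {A S : Matrix ι ι R} (hA : A.IsUpperTriangular) (hA1 : ∀ i, A i i = 1) (hS : IsUnit S)
    (hdiag : (S⁻¹ * A * S).IsDiag) : A = 1 := by
  have hdet : IsUnit S.det := (isUnit_iff_isUnit_det S).mp hS
  have hconj : S⁻¹ * A * S - 1 = S⁻¹ * (A - 1) * S := by
    rw [mul_sub, sub_mul, mul_one, nonsing_inv_mul S hdet]
  have hnil : IsNilpotent (S⁻¹ * (A - 1) * S) :=
    isNilpotent_inv_mul_mul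
      (isNilpotent_of_isUpperTriangular (hA.sub blockTriangular_one) (by simp [hA1])) hS
  have hD : S⁻¹ * A * S = 1 :=
    sub_eq_zero.mp ((hdiag.sub isDiag_one).eq_zero_of_isNilpotent (hconj ▸ hnil))
  calc A = S * (S⁻¹ * A * S) * S⁻¹ := by
        rw [mul_assoc, mul_assoc, mul_nonsing_inv S hdet, mul_one, ← mul_assoc,
          mul_nonsing_inv S hdet, one_mul]
    _ = 1 := by rw [hD, mul_one, mul_nonsing_inv S hdet]

end Matrix

open Polynomial

section AffineComp

variable {R : Type*} [CommRing R]

/-- The matrix of `p ↦ p.comp (C a * X + C b)` on polynomials of degree `< n`, in the monomial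
basis. -/
noncomputable def affineCompMatrix (n : ℕ) (a b : R) : Matrix (Fin n) (Fin n) R :=
  Matrix.of fun i j => ((C a * X + C b) ^ (j : ℕ)).coeff i

theorem coeff_C_mul_X_add_C_pow (a b : R) (i j : ℕ) :
    ((C a * X + C b) ^ j).coeff i = a ^ i * b ^ (j - i) * (j.choose i : R) := by
  have : C a * X + C b = (X + C b).comp (C a * X) := by simp
  rw [this, ← pow_comp, comp_C_mul_X_coeff, coeff_X_add_C_pow]
  ring

theorem affineCompMatrix_apply (n : ℕ) (a b : R) (i j : Fin n) :
    affineCompMatrix n a b i j = a ^ (i : ℕ) * b ^ (j - i : ℕ) * ((j : ℕ).choose i : R) :=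
  coeff_C_mul_X_add_C_pow a b i j

theorem coeff_comp_eq_sum {n : ℕ} {p : R[X]} (hp : p.natDegree < n) (q : R[X]) (i : ℕ) :
    (p.comp q).coeff i = ∑ k : Fin n, p.coeff k * (q ^ (k : ℕ)).coeff i := by
  rw [Polynomial.comp, eval₂_eq_sum_range' C hp, finsetSum_coeff, ← Fin.sum_univ_eq_sum_range]
  simp only [coeff_C_mul]

theorem affineCompMatrix_mul (n : ℕ) (a b a' b' : R) :
    affineCompMatrix n a b * affineCompMatrix n a' b' =
      affineCompMatrix n (a * a') (a' * b + b') := by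
  ext i j
  have hdeg : ((C a' * X + C b') ^ (j : ℕ)).natDegree < n :=
    (natDegree_pow_le_of_le _ natDegree_linear_le).trans_lt (by simp)
  have hcomp : ((C a' * X + C b') ^ (j : ℕ)).comp (C a * X + C b) =
      (C (a * a') * X + C (a' * b + b')) ^ (j : ℕ) := by
    simp only [pow_comp, add_comp, mul_comp, C_comp, X_comp, C_mul, C_add]
    ring
  simp only [affineCompMatrix, mul_apply, of_apply]
  rw [← hcomp, coeff_comp_eq_sum hdeg]
  exact Finset.sum_congr rfl fun k _ => mul_comm _ _

theorem affineCompMatrix_one_zero (n : ℕ) : affineCompMatrix n (1 : R) 0 = 1 := by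
  ext i j
  simp [affineCompMatrix, coeff_X_pow, one_apply, Fin.ext_iff]

theorem isDiag_affineCompMatrix_zero (n : ℕ) (a : R) : (affineCompMatrix n a 0).IsDiag := by
  intro i j hij
  rw [affineCompMatrix, of_apply, C_0, add_zero, mul_pow, ← C_pow, coeff_C_mul_X_pow,
    if_neg (Fin.val_ne_of_ne hij)]

theorem affineCompMatrix_apply_self (n : ℕ) (a b : R) (i : Fin n) :
    affineCompMatrix n a b i i = a ^ (i : ℕ) := by
  simp [affineCompMatrix_apply]

theorem affineCompMatrix_ne_one {n : ℕ} (hn : 2 ≤ n) (a : R) {b : R} (hb : b ≠ 0) :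
    affineCompMatrix n a b ≠ 1 := fun h => by
  have h01 := congrFun (congrFun h ⟨0, by omega⟩) ⟨1, by omega⟩
  rw [affineCompMatrix_apply, one_apply_ne (by simp [Fin.ext_iff])] at h01
  exact hb (by simpa using h01)

theorem isUpperTriangular_affineCompMatrix (n : ℕ) (a b : R) :
    (affineCompMatrix n a b).IsUpperTriangular := fun i j hji => by
  rw [affineCompMatrix_apply, Nat.choose_eq_zero_of_lt (show (j : ℕ) < i from hji),
    Nat.cast_zero, mul_zero]

theorem affineCompMatrix_one_mul_inv (n : ℕ) (c : R) :
    affineCompMatrix n 1 c * affineCompMatrix n 1 (-c) = 1 := by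
  rw [affineCompMatrix_mul, one_mul, one_mul, add_neg_cancel, affineCompMatrix_one_zero]

theorem isUnit_affineCompMatrix_one (n : ℕ) (c : R) : IsUnit (affineCompMatrix n 1 c) :=
  ⟨⟨_, _, affineCompMatrix_one_mul_inv n c, by
    simpa using affineCompMatrix_one_mul_inv n (-c)⟩, rfl⟩

theorem affineCompMatrix_conj (n : ℕ) {a b c : R} (hc : c * (a - 1) = b) :
    (affineCompMatrix n 1 c)⁻¹ * affineCompMatrix n a b * affineCompMatrix n 1 c =
      affineCompMatrix n a 0 := by
  rw [Matrix.inv_eq_right_inv (affineCompMatrix_one_mul_inv n c), affineCompMatrix_mul,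
    affineCompMatrix_mul]
  congr 1
  · ring
  · linear_combination -hc

theorem zhangLiu_eq_affineCompMatrix (n : ℕ) (y x : R) :
    zhangLiu n y x = affineCompMatrix n (x ^ 2) (x * y) := by
  ext i j
  rw [affineCompMatrix_apply, zhangLiu, of_apply]
  split_ifs with hij
  · have hij : (i : ℕ) ≤ j := hij
    rw [mul_pow, ← pow_mul, show i.val + j.val = 2 * i + (j - i) by omega, pow_add]
    ring
  · rw [Nat.choose_eq_zero_of_lt (show (j : ℕ) < i by simpa using hij), Nat.cast_zero, mul_zero]

end AffineComp

theorem zhangLiu_diagonalizable_iff_general {F : Type*} [Field F] (n : ℕ) (hn : 2 ≤ n)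
    (x y : F) :
    (∃ S : Matrix (Fin n) (Fin n) F, IsUnit S ∧ (S⁻¹ * zhangLiu n y x * S).IsDiag) ↔
      (x ≠ 1 ∧ x ≠ -1) ∨ y = 0 := by
  rw [zhangLiu_eq_affineCompMatrix]
  constructor
  · rintro ⟨S, hS, hdiag⟩
    by_contra! hcon
    have hx2 : x ^ 2 = 1 := sq_eq_one_iff.mpr (or_iff_not_imp_left.mpr hcon.1)
    have hxy : x * y ≠ 0 := mul_ne_zero (by rintro rfl; simp at hx2) hcon.2
    rw [hx2] at hdiag
    exact affineCompMatrix_ne_one hn 1 hxy <|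
      (isUpperTriangular_affineCompMatrix n 1 (x * y)).eq_one_of_isDiag_inv_mul_mul
        (by simp [affineCompMatrix_apply_self]) hS hdiag
  · intro h
    obtain ⟨c, hc⟩ : ∃ c : F, c * (x ^ 2 - 1) = x * y := by
      rcases h with hx | rfl
      · refine ⟨x * y / (x ^ 2 - 1), div_mul_cancel₀ _ (sub_ne_zero.mpr ?_)⟩
        rw [Ne, sq_eq_one_iff]
        tauto
      · exact ⟨0, by simp⟩
    refine ⟨_, isUnit_affineCompMatrix_one n c, ?_⟩
    rw [affineCompMatrix_conj n hc]
    exact isDiag_affineCompMatrix_zero n _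

theorem zhangLiu_diagonalizable_iff {F : Type*} [Field F] (n : ℕ) (hn : 2 ≤ n)
    (x y : F) (hx : x ≠ 0) :
    (∃ S : Matrix (Fin n) (Fin n) F, IsUnit S ∧ (S⁻¹ * zhangLiu n y x * S).IsDiag) ↔
      (x ≠ 1 ∧ x ≠ -1) ∨ y = 0 :=
  zhangLiu_diagonalizable_iff_general n hn x y
end

section
/- Let F be a field, let n ≥ 2, let y ∈ F with y ≠ 0, and let x ∈ {1, -1} ⊆ F. Then the n×n Zhang–Liu matrix Q(y,x) is not diagonalizable over F: there is no invertible n×n matrix S over F such that S⁻¹ · Q(y,x) · S is diagonal. -/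
open Matrix Finset

/-! A diagonalizable matrix whose characteristic polynomial is `(X - c)^n` is the scalar matrix `c`.
For `x = ±1` the Zhang–Liu matrix is upper unitriangular, so its characteristic polynomial is
`(X - 1)^n`; it is nevertheless not the identity, since its `(1, 2)` entry is `y x ≠ 0`. -/

open Polynomial in
theorem Matrix.eq_scalar_of_isDiag_conj_of_charpoly_eq {R ι : Type*} [CommRing R] [IsReduced R]
    [Fintype ι] [DecidableEq ι] {A S : Matrix ι ι R} (hS : IsUnit S)
    (hD : (S⁻¹ * A * S).IsDiag) {c : R} (hA : A.charpoly = (X - C c) ^ Fintype.card ι) :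
    A = scalar ι c := by
  set D := S⁻¹ * A * S
  have hD_charpoly : D.charpoly = (X - C c) ^ Fintype.card ι := by
    rw [← hA, ← charpoly_units_conj' hS.unit A]
    rfl
  have hD_diag : ∀ i, D i i = c := by
    intro i
    have hroot : D.charpoly.eval (D i i) = 0 := by
      rw [← hD.diagonal_diag, charpoly_diagonal, eval_prod]
      exact Finset.prod_eq_zero (Finset.mem_univ i) (by simp)
    rw [hD_charpoly, eval_pow, eval_sub, eval_X, eval_C] at hroot
    exact sub_eq_zero.mp (eq_zero_of_pow_eq_zero hroot)
  have hD_scalar : D = scalar ι c := by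
    rw [← hD.diagonal_diag]
    ext i j
    simp [diagonal_apply, hD_diag]
  have hdet : IsUnit S.det := (isUnit_iff_isUnit_det S).mp hS
  calc A = S * D * S⁻¹ := by
        simp only [D, ← mul_assoc, mul_nonsing_inv _ hdet, one_mul]
        rw [mul_assoc, mul_nonsing_inv _ hdet, mul_one]
    _ = scalar ι c := by
        rw [hD_scalar, ← (scalar_commute c (fun _ => mul_comm _ _) S).eq, mul_assoc,
          mul_nonsing_inv _ hdet, mul_one]

section

variable {R : Type*} [CommRing R] (n : ℕ) (y : R)

theorem zhangLiu_isUpperTriangular (x : R) : (zhangLiu n y x).IsUpperTriangular :=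
  fun _ _ hij => if_neg (not_le.mpr hij)

theorem zhangLiu_apply_self {x : R} (hx : x ^ 2 = 1) (i : Fin n) : zhangLiu n y x i i = 1 := by
  simp [zhangLiu, ← two_mul, pow_mul, hx]

open Polynomial in
theorem zhangLiu_charpoly {x : R} (hx : x ^ 2 = 1) :
    (zhangLiu n y x).charpoly = (X - 1) ^ n := by
  simp [charpoly_of_isUpperTriangular _ (zhangLiu_isUpperTriangular n y x),
    zhangLiu_apply_self n y hx]

theorem zhangLiu_apply_zero_one (x : R) (hn : 2 ≤ n) :
    zhangLiu n y x (⟨0, by omega⟩ : Fin n) ⟨1, by omega⟩ = y * x := by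
  norm_num [zhangLiu]

end

theorem zhangLiu_not_diagonalizable {F : Type*} [Field F] (n : ℕ) (hn : 2 ≤ n)
    (y : F) (hy : y ≠ 0) (x : F) (hx : x = 1 ∨ x = -1) :
    ¬ ∃ S : Matrix (Fin n) (Fin n) F, IsUnit S ∧ (S⁻¹ * zhangLiu n y x * S).IsDiag := by
  rintro ⟨S, hS, hdiag⟩
  have hx_sq : x ^ 2 = 1 := by rcases hx with rfl | rfl <;> norm_num
  have hQ : zhangLiu n y x = 1 := by
    simpa using Matrix.eq_scalar_of_isDiag_conj_of_charpoly_eq hS hdiag (c := 1)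
      (by simpa using zhangLiu_charpoly n y hx_sq)
  have hyx := congr_fun₂ hQ ⟨0, by omega⟩ ⟨1, by omega⟩
  rw [zhangLiu_apply_zero_one n y x hn, one_apply_ne (by simp [Fin.ext_iff])] at hyx
  exact mul_ne_zero hy (by rintro rfl; simp at hx_sq) hyx
end

section
/- Let F be a field of characteristic 0, let n ≥ 2, let y ∈ F with y ≠ 0, and let x ∈ {1, -1} ⊆ F. Then the n×n Zhang–Liu matrix Q(y,x) has infinite multiplicative order: Q(y,x)^k ≠ I for every integer k ≥ 1. -/
/-!
The first two columns of `zhangLiu n y x` are `e₀` and `x² e₁ + y x e₀`. When `x² = 1` the matrix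
therefore fixes `u = y x e₀` and sends `e₁` to `e₁ + u`, so its `k`-th power sends `e₁` to
`e₁ + k u`, which differs from `e₁` in characteristic zero.
-/

open Matrix Finset

namespace Matrix

section Semiring

variable {ι R : Type*} [Fintype ι] [DecidableEq ι] [Semiring R] {A : Matrix ι ι R} {u v : ι → R}

theorem pow_mulVec_eq_self (hu : A *ᵥ u = u) (k : ℕ) : (A ^ k) *ᵥ u = u := by
  induction k with
  | zero => rw [pow_zero, one_mulVec]
  | succ k ih => rw [pow_succ, ← mulVec_mulVec, hu, ih]

theorem pow_mulVec_eq_add_nsmul (hu : A *ᵥ u = u) (hv : A *ᵥ v = v + u) (k : ℕ) :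
    (A ^ k) *ᵥ v = v + k • u := by
  induction k with
  | zero => rw [pow_zero, one_mulVec, zero_smul, add_zero]
  | succ k ih =>
    rw [pow_succ, ← mulVec_mulVec, hv, mulVec_add, ih, pow_mulVec_eq_self hu, succ_nsmul, add_assoc]

end Semiring

section Ring

variable {ι R : Type*} [Fintype ι] [DecidableEq ι] [Ring R] [IsAddTorsionFree R]
  {A : Matrix ι ι R} {u v : ι → R}

theorem pow_ne_one_of_mulVec_eq_add (hu : A *ᵥ u = u)
    (hv : A *ᵥ v = v + u) (hu0 : u ≠ 0) {k : ℕ} (hk : k ≠ 0) : A ^ k ≠ 1 := by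
  intro hAk
  have hku := pow_mulVec_eq_add_nsmul hu hv k
  rw [hAk, one_mulVec, left_eq_add, smul_eq_zero] at hku
  exact hku.elim hk hu0

end Ring

end Matrix

section ZhangLiu

variable {R : Type*} [CommRing R] (m : ℕ) (y x : R)

theorem zhangLiu_col_zero : (zhangLiu (m + 1) y x).col 0 = Pi.single 0 1 := by
  ext i
  rcases Fin.eq_zero_or_eq_succ i with rfl | ⟨j, rfl⟩
  · simp [zhangLiu]
  · simp only [col_apply, zhangLiu, of_apply]
    rw [if_neg (Fin.succ_pos j).not_ge, Pi.single_eq_of_ne (Fin.succ_ne_zero j)]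

theorem zhangLiu_col_one :
    (zhangLiu (m + 2) y x).col 1 = Pi.single 1 (x ^ 2) + Pi.single 0 (y * x) := by
  ext ⟨_ | _ | i, hi⟩
  · simp [zhangLiu]
  · simp [zhangLiu]
  · simp only [col_apply, zhangLiu, of_apply]
    rw [if_neg]
    · simp [Fin.ext_iff]
    · simp [Fin.le_def]

end ZhangLiu

theorem zhangLiu_infinite_order {F : Type*} [Field F] [CharZero F]
    (n : ℕ) (hn : 2 ≤ n) (y : F) (hy : y ≠ 0) (x : F) (hx : x = 1 ∨ x = -1) :
    ∀ k : ℕ, 1 ≤ k → zhangLiu n y x ^ k ≠ 1 := by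
  intro k hk
  obtain ⟨m, rfl⟩ : ∃ m, n = m + 2 := ⟨n - 2, by omega⟩
  have hx2 : x ^ 2 = 1 := by rcases hx with rfl | rfl <;> norm_num
  have hx0 : x ≠ 0 := by rintro rfl; norm_num at hx2
  refine pow_ne_one_of_mulVec_eq_add (u := Pi.single 0 (y * x)) (v := Pi.single 1 1) ?_ ?_
    (by simpa using mul_ne_zero hy hx0) (by omega)
  · rw [mulVec_single, zhangLiu_col_zero]
    ext i
    simp [Pi.single_apply]
  · rw [mulVec_single_one, zhangLiu_col_one, hx2]
end

section
/- Let F be a field, let n ≥ 1, let x ∈ F with x ≠ 1 and x ≠ -1, let y ∈ F, and set z = y·x/(x² - 1). Then P₁(-z) · Q(y,x) · P₁(z) = D(x²); that is, conjugating the Zhang–Liu matrix by P₁(z) diagonalizes it with diagonal entries (x²)^{i-1}. -/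
open Matrix Finset

/-!
`pascal1 n y` is the matrix of the Taylor shift `p(t) ↦ p(t + y)` on polynomials of degree `< n`,
so `y ↦ pascal1 n y` is additive, and conjugation by `diagD n α` rescales the shift by `α`.
Writing `Q(y,x) = D(x) P₁(y) D(x)` and moving both copies of `D(x)` to the left turns
`P₁(-z) Q(y,x) P₁(z)` into `D(x²) P₁((y - z x) x + z)`, and the choice of `z` makes the shift zero.
-/

section

variable {R : Type*} [CommRing R]

theorem add_pow_mul_choose_eq_sum_Icc (a b : R) {i k : ℕ} (hik : i ≤ k) :
    ∑ j ∈ Icc i k, a ^ (j - i) * j.choose i * (b ^ (k - j) * k.choose j) =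
      (a + b) ^ (k - i) * k.choose i := by
  rw [← Ico_add_one_right_eq_Icc, sum_Ico_eq_sum_range, show k + 1 - i = k - i + 1 by omega,
    add_pow, sum_mul]
  refine sum_congr rfl fun l _ => ?_
  have hchoose : (k.choose (i + l) * (i + l).choose i : R) = k.choose i * (k - i).choose l := by
    rw [← Nat.cast_mul, ← Nat.cast_mul, Nat.choose_mul (Nat.le_add_right i l),
      Nat.add_sub_cancel_left]
  rw [Nat.add_sub_cancel_left, Nat.sub_add_eq]
  linear_combination a ^ l * b ^ (k - i - l) * hchoose

theorem pascal1_add (n : ℕ) (a b : R) : pascal1 n (a + b) = pascal1 n a * pascal1 n b := by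
  ext i k
  have hterm : ∀ j : Fin n, pascal1 n a i j * pascal1 n b j k =
      if j ∈ Icc i k then a ^ (j.val - i) * j.val.choose i * (b ^ (k.val - j) * k.val.choose j)
      else 0 := by
    intro j
    by_cases hij : i ≤ j <;> by_cases hjk : j ≤ k <;> simp [pascal1, hij, hjk]
  rw [mul_apply, sum_congr rfl fun j _ => hterm j, sum_ite_mem, univ_inter]
  by_cases hik : i ≤ k
  · simp only [pascal1, of_apply, if_pos hik]
    rw [← add_pow_mul_choose_eq_sum_Icc a b hik, ← Fin.map_valEmbedding_Icc, sum_map]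
    rfl
  · simp [pascal1, hik, Icc_eq_empty hik]

theorem pascal1_mul_diagD (n : ℕ) (a α : R) :
    pascal1 n a * diagD n α = diagD n α * pascal1 n (a * α) := by
  ext i j
  rw [diagD, mul_diagonal, diagonal_mul]
  by_cases hij : i ≤ j
  · simp only [pascal1, of_apply, if_pos hij, mul_pow, ← pow_mul_pow_sub α (Fin.le_def.1 hij)]
    ring
  · simp [pascal1, hij]

theorem zhangLiu_eq_diagD_mul_pascal1_mul_diagD (n : ℕ) (y x : R) :
    zhangLiu n y x = diagD n x * pascal1 n y * diagD n x := by
  ext i j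
  rw [diagD, mul_diagonal, diagonal_mul]
  by_cases hij : i ≤ j
  · simp only [zhangLiu, pascal1, of_apply, if_pos hij, pow_add]
    ring
  · simp [zhangLiu, pascal1, hij]

theorem diagD_mul_diagD (n : ℕ) (α β : R) : diagD n α * diagD n β = diagD n (α * β) := by
  simp only [diagD, diagonal_mul_diagonal, mul_pow]

end

theorem zhangLiu_conjugation_general {F : Type*} [Field F] (n : ℕ)
    (x y : F) (hx1 : x ≠ 1) (hx2 : x ≠ -1) (z : F) (hz : z = y * x / (x ^ 2 - 1)) :
    pascal1 n (-z) * zhangLiu n y x * pascal1 n z = diagD n (x ^ 2) := by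
  have hx : x ^ 2 - 1 ≠ 0 := sub_ne_zero.2 (sq_ne_one_iff.2 ⟨hx1, hx2⟩)
  have hshift : (-z * x + y) * x + z = 0 := by
    rw [hz]
    field_simp
    ring
  calc pascal1 n (-z) * zhangLiu n y x * pascal1 n z
      = (pascal1 n (-z) * diagD n x) * pascal1 n y * (diagD n x * pascal1 n z) := by
        rw [zhangLiu_eq_diagD_mul_pascal1_mul_diagD]
        simp only [mul_assoc]
    _ = diagD n x * (pascal1 n (-z * x + y) * diagD n x) * pascal1 n z := by
        rw [pascal1_mul_diagD, pascal1_add]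
        simp only [mul_assoc]
    _ = diagD n (x ^ 2) * pascal1 n ((-z * x + y) * x + z) := by
        rw [pascal1_mul_diagD, ← mul_assoc, diagD_mul_diagD, ← sq, pascal1_add, mul_assoc]
    _ = diagD n (x ^ 2) := by rw [hshift, pascal1_zero, mul_one]

theorem zhangLiu_conjugation {F : Type*} [Field F] (n : ℕ) (hn : 1 ≤ n)
    (x y : F) (hx1 : x ≠ 1) (hx2 : x ≠ -1) (z : F) (hz : z = y * x / (x ^ 2 - 1)) :
    pascal1 n (-z) * zhangLiu n y x * pascal1 n z = diagD n (x ^ 2) :=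
  zhangLiu_conjugation_general n x y hx1 hx2 z hz
end
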